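/- A torsionless abelian group G binds a subgroup H if and only if every homomorphism from G to S = ⊕_{n∈ℕ} ℤ maps H into a subgroup of finite rank. -/
import Mathlib

open Cardinal

/-- A group is torsionless if homomorphisms to ℤ separate its points. -/
def Torsionless (G : Type*) [AddCommGroup G] : Prop :=
  ∀ g : G, g ≠ 0 → ∃ f : G →+ ℤ, f g ≠ 0

/-- `G` binds a subgroup `H` if every homomorphism from `G` to a free abelian
group maps `H` into a subgroup of finite rank. -/
def Binds.{u} {G : Type*} [AddCommGroup G] (H : AddSubgroup G) : Prop :=
  ∀ (ι : Type u) (f : G →+ (ι →₀ ℤ)), Module.rank ℤ (H.map f) < ℵ₀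

theorem stmt_1.{u} {G : Type*} [AddCommGroup G] (hG : Torsionless G) (H : AddSubgroup G) :
    Binds.{u} H ↔ ∀ f : G →+ (ℕ →₀ ℤ), Module.rank ℤ (H.map f) < ℵ₀ := by
  classical
  constructor
  · intro hB f
    set e : (ℕ →₀ ℤ) ≃ₗ[ℤ] (ULift.{u} ℕ →₀ ℤ) :=
      Finsupp.domLCongr (Equiv.ulift.symm) with he
    have h := hB (ULift.{u} ℕ) (e.toLinearMap.toAddMonoidHom.comp f)
    have eq : (H.map f) ≃+ (H.map (e.toLinearMap.toAddMonoidHom.comp f)) :=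
      (AddEquiv.addSubgroupMap e.toAddEquiv (H.map f)).trans
        (AddEquiv.addSubgroupCongr (by rw [AddSubgroup.map_map]; rfl))
    have hre := (eq.toIntLinearEquiv).lift_rank_eq
    rw [← Cardinal.lift_lt_aleph0.{0, u}, hre, Cardinal.lift_lt_aleph0]
    exact h
  · intro hC ι f
    by_contra hlt
    push_neg at hlt
    have hv : ∀ n : ℕ, ∃ v : Fin n → ↥(AddSubgroup.map f H),
        LinearIndependent ℤ v := fun n =>
      exists_linearIndependent_of_le_rank ((Cardinal.nat_lt_aleph0 n).le.trans hlt)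
    choose v hvind using hv
    set T : Set ι := ⋃ n : ℕ, ⋃ i : Fin n, ((v n i : ι →₀ ℤ).support : Set ι) with hT
    have hTc : T.Countable :=
      Set.countable_iUnion fun n => Set.countable_iUnion fun i =>
        ((v n i : ι →₀ ℤ).support : Set ι).toFinite.countable
    haveI : Countable T := hTc.to_subtype
    obtain ⟨g⟩ : Nonempty (T ↪ ℕ) := nonempty_embedding_nat T
    set π : (ι →₀ ℤ) →ₗ[ℤ] (ℕ →₀ ℤ) :=
      (Finsupp.lmapDomain ℤ ℤ g).comp
        ((Finsupp.supportedEquivFinsupp (M := ℤ) (R := ℤ) T).toLinearMap.comp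
          (Finsupp.restrictDom ℤ ℤ T)) with hπ
    have hπsupp : ∀ x ∈ Finsupp.supported ℤ ℤ T, π x = 0 → x = 0 := by
      intro x hx hx0
      have h2 : (Finsupp.restrictDom ℤ ℤ T) x = ⟨x, hx⟩ := by
        have := LinearMap.congr_fun (Finsupp.restrictDom_comp_subtype (M := ℤ) (R := ℤ) (s := T))
          ⟨x, hx⟩
        simpa using this
      have h3 : Finsupp.mapDomain g
          ((Finsupp.supportedEquivFinsupp (M := ℤ) (R := ℤ) T) ⟨x, hx⟩) = 0 := by
        rw [hπ] at hx0
        simpa [h2, Finsupp.lmapDomain_apply] using hx0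
      have h4 : (Finsupp.supportedEquivFinsupp (M := ℤ) (R := ℤ) T) ⟨x, hx⟩ = 0 :=
        Finsupp.mapDomain_injective g.injective (by rw [h3, Finsupp.mapDomain_zero])
      have h5 : (⟨x, hx⟩ : Finsupp.supported ℤ ℤ T) = 0 :=
        (Finsupp.supportedEquivFinsupp (M := ℤ) (R := ℤ) T).injective (by simpa using h4)
      simpa using congrArg Subtype.val h5
    have hdisj : Disjoint (Finsupp.supported ℤ ℤ T) (LinearMap.ker π) := by
      rw [Submodule.disjoint_def]
      intro x hx hker
      exact hπsupp x hx (LinearMap.mem_ker.mp hker)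
    set f' : G →+ (ℕ →₀ ℤ) := π.toAddMonoidHom.comp f with hf'
    have key : ℵ₀ ≤ Module.rank ℤ (H.map f') := by
      rw [Cardinal.aleph0_le]
      intro n
      -- the family π ∘ v n, lifted to the subgroup
      have hmemT : ∀ i : Fin n, (v n i : ι →₀ ℤ) ∈ Finsupp.supported ℤ ℤ T := by
        intro i
        intro a ha
        exact Set.mem_iUnion.mpr ⟨n, Set.mem_iUnion.mpr ⟨i, ha⟩⟩
      have hind1 : LinearIndependent ℤ (fun i : Fin n => (v n i : ι →₀ ℤ)) :=
        (hvind n).map' ((AddSubgroup.map f H).subtype).toIntLinearMap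
          (LinearMap.ker_eq_bot.mpr Subtype.val_injective)
      have hind2 : LinearIndependent ℤ (fun i : Fin n => π (v n i : ι →₀ ℤ)) := by
        apply hind1.map (f := π)
        apply Disjoint.mono_left _ hdisj
        rw [Submodule.span_le]
        rintro x ⟨i, rfl⟩
        exact hmemT i
      have hmem : ∀ i : Fin n, π (v n i : ι →₀ ℤ) ∈ H.map f' := by
        intro i
        obtain ⟨h, hh, hfh⟩ := (v n i).2
        exact ⟨h, hh, by
          simp only [hf', AddMonoidHom.comp_apply, LinearMap.toAddMonoidHom_coe, hfh]⟩
      have hind3 : LinearIndependent ℤ (fun i : Fin n =>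
          (⟨π (v n i : ι →₀ ℤ), hmem i⟩ : ↥(H.map f'))) := by
        exact hind2.of_comp ((H.map f').subtype).toIntLinearMap
      simpa using hind3.cardinal_le_rank
    exact absurd (hC f') (not_lt.mpr key)
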